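/- For integers k ≥ 1 and l, the group Γ_{k,l} is isomorphic to a semidirect product ℤ^3 ⋊_θ ℤ, where ℤ^3 is the free abelian group on the images of z, x, t, the ℤ factor is generated by y acting by conjugation, and the generator of ℤ acts on ℤ^3 (in the ordered basis z, x, t) by the unipotent matrix !![1, -1, -l; 0, 1, -k; 0, 0, 1]. -/

import Mathlib

/-!
Rewriting the relators, `Γ k l` is generated by pairwise commuting `z, x, t` together with `y`,
where `y` conjugates `z ↦ z`, `x ↦ z⁻¹ x`, `t ↦ z⁻ˡ x⁻ᵏ t`: these are the columns of `θ`. The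
semidirect product `ℤ³ ⋊_θ ℤ` satisfies the same relations (`NilRelations`), with the basis of
`ℤ³` as `z, x, t` and the generator of `ℤ` as `y`, and it is universal for them: a homomorphism
out of it is a homomorphism `ℤ³ → H`, i.e. three commuting elements, intertwining `θ` with
conjugation by the image of `y`. The two maps so obtained are inverse on generators.
-/

namespace Stmt3

/-- The free group generators `x, y, z, t` for the `Nil⁴` group. -/
private abbrev gx : FreeGroup (Fin 4) := FreeGroup.of 0
private abbrev gy : FreeGroup (Fin 4) := FreeGroup.of 1
private abbrev gz : FreeGroup (Fin 4) := FreeGroup.of 2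
private abbrev gt : FreeGroup (Fin 4) := FreeGroup.of 3

/-- The relators of the presentation
`⟨x, y, z, t | t x t⁻¹ = x, t y t⁻¹ = xᵏ y zˡ, t z t⁻¹ = z, [x,y] = z, xz = zx, yz = zy⟩`. -/
def nilRels (k l : ℤ) : Set (FreeGroup (Fin 4)) :=
  { gt * gx * gt⁻¹ * gx⁻¹,
    gt * gy * gt⁻¹ * (gx ^ k * gy * gz ^ l)⁻¹,
    gt * gz * gt⁻¹ * gz⁻¹,
    gx * gy * gx⁻¹ * gy⁻¹ * gz⁻¹,
    gx * gz * gx⁻¹ * gz⁻¹,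
    gy * gz * gy⁻¹ * gz⁻¹ }

/-- `Γ k l`, the (finite index model of the) fundamental group of a closed `Nil⁴`-manifold. -/
abbrev Γ (k l : ℤ) : Type := PresentedGroup (nilRels k l)

/-- The images of the generators in `Γ k l`. -/
def xΓ (k l : ℤ) : Γ k l := PresentedGroup.of 0
def yΓ (k l : ℤ) : Γ k l := PresentedGroup.of 1
def zΓ (k l : ℤ) : Γ k l := PresentedGroup.of 2
def tΓ (k l : ℤ) : Γ k l := PresentedGroup.of 3

/-- The unipotent matrix `!![1, -1, -l; 0, 1, -k; 0, 0, 1]` describing the action of `y`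
on `ℤ³ = ⟨z, x, t⟩` (coordinates ordered as `z, x, t`). -/
def nilMatrix (k l : ℤ) : Matrix (Fin 3) (Fin 3) ℤ := !![1, -1, -l; 0, 1, -k; 0, 0, 1]

/-- The automorphism `θ` of `ℤ³` given by the matrix `nilMatrix k l`. -/
def θ (k l : ℤ) : (Fin 3 → ℤ) ≃+ (Fin 3 → ℤ) where
  toFun v := (nilMatrix k l).mulVec v
  invFun v := (!![1, 1, k + l; 0, 1, k; 0, 0, 1] : Matrix (Fin 3) (Fin 3) ℤ).mulVec v
  left_inv v := by
    funext i
    fin_cases i <;>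
      simp [nilMatrix, Matrix.mulVec, dotProduct, Fin.sum_univ_three, Matrix.vecHead,
        Matrix.vecTail, Function.comp] <;> ring
  right_inv v := by
    funext i
    fin_cases i <;>
      simp [nilMatrix, Matrix.mulVec, dotProduct, Fin.sum_univ_three, Matrix.vecHead,
        Matrix.vecTail, Function.comp] <;> ring
  map_add' u v := by simp [Matrix.mulVec_add]

/-- The action of the generator of `ℤ` (the image of `y`) on `ℤ³` through `θ`. -/
def nilAction (k l : ℤ) : Multiplicative ℤ →* MulAut (Multiplicative (Fin 3 → ℤ)) :=
  zpowersHom (MulAut (Multiplicative (Fin 3 → ℤ))) (AddEquiv.toMultiplicative (θ k l))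

/-- The semidirect product `ℤ³ ⋊_θ ℤ`. -/
abbrev NilSemidirect (k l : ℤ) : Type :=
  Multiplicative (Fin 3 → ℤ) ⋊[nilAction k l] Multiplicative ℤ

open Multiplicative SemidirectProduct

section General

variable {ι G H : Type*} [Group G] [Group H]

theorem MulAut.semiconj_zpow {f : G → H} {α : MulAut G} {β : MulAut H}
    (h : Function.Semiconj f α β) (n : ℤ) : Function.Semiconj f ⇑(α ^ n) ⇑(β ^ n) := by
  induction n using Int.induction_on with
  | zero => simpa only [zpow_zero, MulAut.coe_one] using Function.Semiconj.id_right
  | succ n ih => simpa only [zpow_add_one, MulAut.coe_mul] using ih.comp_right h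
  | pred n ih =>
    simpa only [zpow_sub_one, MulAut.coe_mul] using
      ih.comp_right (h.inverses_right (α.apply_inv_self) (β.inv_apply_self))

theorem closure_range_ofAdd_single [Fintype ι] [DecidableEq ι] :
    Subgroup.closure (Set.range fun i : ι => ofAdd (Pi.single i (1 : ℤ))) = ⊤ := by
  refine eq_top_iff.2 fun v _ => ?_
  rw [← ofAdd_toAdd v, ← Finset.univ_sum_single (toAdd v), ofAdd_sum]
  refine Subgroup.prod_mem _ fun i _ => ?_
  rw [← mul_one (toAdd v i), ← smul_eq_mul, Pi.single_smul', ofAdd_zsmul]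
  exact zpow_mem (Subgroup.subset_closure (Set.mem_range_self i)) _

theorem MonoidHom.ext_ofAdd_single [Finite ι] [DecidableEq ι] {f g : Multiplicative (ι → ℤ) →* H}
    (h : ∀ i, f (ofAdd (Pi.single i 1)) = g (ofAdd (Pi.single i 1))) : f = g :=
  have := Fintype.ofFinite ι
  MonoidHom.eq_of_eqOn_dense closure_range_ofAdd_single (Set.forall_mem_range.2 h)

theorem SemidirectProduct.hom_ext_ofAdd_single [Finite ι] [DecidableEq ι]
    {ρ : Multiplicative ℤ →* MulAut (Multiplicative (ι → ℤ))}
    {f g : Multiplicative (ι → ℤ) ⋊[ρ] Multiplicative ℤ →* H}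
    (hl : ∀ i, f (inl (ofAdd (Pi.single i 1))) = g (inl (ofAdd (Pi.single i 1))))
    (hr : f (inr (ofAdd 1)) = g (inr (ofAdd 1))) : f = g :=
  SemidirectProduct.hom_ext (MonoidHom.ext_ofAdd_single hl) (MonoidHom.ext_mint hr)

def zpowersPiHom [Fintype ι] [DecidableEq ι] (a : ι → H)
    (ha : Pairwise fun i j => Commute (a i) (a j)) : Multiplicative (ι → ℤ) →* H :=
  (MonoidHom.noncommPiCoprod (fun i => zpowersHom H (a i))
    (ha.mono fun _ _ h _ _ => h.zpow_zpow _ _)).comp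
      (MulEquiv.funMultiplicative ι ℤ).toMonoidHom

theorem zpowersPiHom_ofAdd_single [Fintype ι] [DecidableEq ι] (a : ι → H)
    (ha : Pairwise fun i j => Commute (a i) (a j)) (i : ι) (n : ℤ) :
    zpowersPiHom a ha (ofAdd (Pi.single i n)) = a i ^ n := by
  have : MulEquiv.funMultiplicative ι ℤ (ofAdd (Pi.single i n)) = Pi.mulSingle i (ofAdd n) := by
    ext j; by_cases hj : j = i <;> simp [MulEquiv.funMultiplicative, hj]
  rw [zpowersPiHom, MonoidHom.comp_apply, MulEquiv.coe_toMonoidHom, this,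
    MonoidHom.noncommPiCoprod_mulSingle, zpowersHom_apply, toAdd_ofAdd]

end General

section Relations

variable (k l : ℤ) {H : Type*} [Group H]

structure NilRelations (x y z t : H) : Prop where
  commute_zx : Commute z x
  commute_zt : Commute z t
  commute_xt : Commute x t
  conj_z : y * z * y⁻¹ = z
  conj_x : y * x * y⁻¹ = z⁻¹ * x
  conj_t : y * t * y⁻¹ = z ^ (-l) * x ^ (-k) * t

variable {k l}

theorem forall_mem_nilRels_iff {x y z t : H} :
    (∀ r ∈ nilRels k l, FreeGroup.lift ![x, y, z, t] r = 1) ↔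
      t * x * t⁻¹ = x ∧ t * y * t⁻¹ = x ^ k * y * z ^ l ∧ t * z * t⁻¹ = z ∧
        x * y * x⁻¹ * y⁻¹ = z ∧ x * z * x⁻¹ = z ∧ y * z * y⁻¹ = z := by
  simp only [nilRels, Set.mem_insert_iff, Set.mem_singleton_iff, forall_eq_or_imp, forall_eq,
    map_mul, map_inv, map_zpow, FreeGroup.lift_apply_of, mul_inv_eq_one]
  rfl

theorem nilRelations_iff {x y z t : H} :
    NilRelations k l x y z t ↔ ∀ r ∈ nilRels k l, FreeGroup.lift ![x, y, z, t] r = 1 := by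
  rw [forall_mem_nilRels_iff]
  constructor
  · rintro ⟨hzx, hzt, hxt, hz, hx, ht⟩
    have hzy : Commute z y := (mul_inv_eq_iff_eq_mul.1 hz).symm
    refine ⟨by rw [← hxt.eq]; group, ?_, by rw [← hzt.eq]; group,
      ?_, by rw [← hzx.eq]; group, hz⟩
    · have ht' : t = x ^ k * z ^ l * (y * t * y⁻¹) := by rw [ht]; group
      calc t * y * t⁻¹ = x ^ k * z ^ l * (y * t * y⁻¹) * y * t⁻¹ := by rw [← ht']
        _ = x ^ k * (z ^ l * y) := by group
        _ = x ^ k * y * z ^ l := by rw [(hzy.zpow_left l).eq, mul_assoc]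
    · calc x * y * x⁻¹ * y⁻¹ = (y * x * y⁻¹ * x⁻¹)⁻¹ := by group
        _ = z := by rw [hx]; group
  · rintro ⟨hxt, hyt, hzt, hxy, hxz, hyz⟩
    have hzy : Commute y z := mul_inv_eq_iff_eq_mul.1 hyz
    refine ⟨(mul_inv_eq_iff_eq_mul.1 hxz).symm, (mul_inv_eq_iff_eq_mul.1 hzt).symm,
      (mul_inv_eq_iff_eq_mul.1 hxt).symm, hyz, by rw [← hxy]; group, ?_⟩
    calc y * t * y⁻¹ = z ^ (-l) * (y * z ^ l) * t * y⁻¹ := by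
          rw [(hzy.zpow_right l).eq]; group
      _ = z ^ (-l) * x ^ (-k) * (t * y * t⁻¹) * t * y⁻¹ := by rw [hyt]; group
      _ = z ^ (-l) * x ^ (-k) * t := by group

end Relations

section NilSemidirect

variable (k l : ℤ)

theorem nilAction_ofAdd_one_apply (v : Fin 3 → ℤ) :
    nilAction k l (ofAdd 1) (ofAdd v) = ofAdd (θ k l v) := by
  simp [nilAction]

theorem nilAction_single_zero :
    nilAction k l (ofAdd 1) (ofAdd (Pi.single 0 1)) = ofAdd (Pi.single 0 1) := by
  rw [nilAction_ofAdd_one_apply]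
  congr 1; ext i; fin_cases i <;> simp [θ, nilMatrix, Matrix.vecHead, Matrix.vecTail]

theorem nilAction_single_one :
    nilAction k l (ofAdd 1) (ofAdd (Pi.single 1 1)) =
      (ofAdd (Pi.single 0 1))⁻¹ * ofAdd (Pi.single 1 1) := by
  rw [nilAction_ofAdd_one_apply, ← ofAdd_neg, ← ofAdd_add]
  congr 1; ext i; fin_cases i <;> simp [θ, nilMatrix, Matrix.vecHead, Matrix.vecTail]

theorem nilAction_single_two :
    nilAction k l (ofAdd 1) (ofAdd (Pi.single 2 1)) =
      ofAdd (Pi.single 0 1) ^ (-l) * ofAdd (Pi.single 1 1) ^ (-k) * ofAdd (Pi.single 2 1) := by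
  rw [nilAction_ofAdd_one_apply, ← ofAdd_zsmul, ← ofAdd_zsmul, ← ofAdd_add, ← ofAdd_add]
  congr 1; ext i; fin_cases i <;> simp [θ, nilMatrix, Matrix.vecHead, Matrix.vecTail]

theorem nilRelations_nilSemidirect :
    NilRelations k l (inl (ofAdd (Pi.single 1 1)) : NilSemidirect k l) (inr (ofAdd 1))
      (inl (ofAdd (Pi.single 0 1))) (inl (ofAdd (Pi.single 2 1))) := by
  have hcomm (u v) : Commute (inl u : NilSemidirect k l) (inl v) := (Commute.all u v).map inl
  have hconj (v) : (inr (ofAdd 1) : NilSemidirect k l) * inl v * (inr (ofAdd 1))⁻¹ =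
      inl (nilAction k l (ofAdd 1) v) := by rw [inl_aut, map_inv]
  refine ⟨hcomm _ _, hcomm _ _, hcomm _ _, ?_, ?_, ?_⟩ <;>
    simp only [hconj, nilAction_single_zero, nilAction_single_one, nilAction_single_two,
      map_mul, map_inv, map_zpow]

end NilSemidirect

namespace NilRelations

variable {k l : ℤ} {H : Type*} [Group H] {x y z t : H}

theorem pairwise_commute (h : NilRelations k l x y z t) :
    Pairwise fun i j => Commute (![z, x, t] i) (![z, x, t] j) := by
  intro i j _
  fin_cases i <;> fin_cases j <;>
    simp [h.commute_zx, h.commute_zt, h.commute_xt, h.commute_zx.symm, h.commute_zt.symm,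
      h.commute_xt.symm]

variable (h : NilRelations k l x y z t)

theorem semiconj_nilAction (n : ℤ) :
    Function.Semiconj (zpowersPiHom ![z, x, t] h.pairwise_commute) (nilAction k l (ofAdd n))
      (MulAut.conj (y ^ n)) := by
  let f := zpowersPiHom ![z, x, t] h.pairwise_commute
  have hgen : Function.Semiconj f (nilAction k l (ofAdd 1)) (MulAut.conj y) := by
    suffices f.comp (nilAction k l (ofAdd 1)).toMonoidHom = (MulAut.conj y).toMonoidHom.comp f
      from DFunLike.congr_fun this
    refine MonoidHom.ext_ofAdd_single fun i => ?_
    fin_cases i <;>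
      simp [f, nilAction_single_zero, nilAction_single_one, nilAction_single_two,
        zpowersPiHom_ofAdd_single, h.conj_z, h.conj_x, h.conj_t]
  have := MulAut.semiconj_zpow hgen n
  rwa [← map_zpow (nilAction k l), ← map_zpow MulAut.conj, ← ofAdd_zsmul, smul_eq_mul,
    mul_one] at this

def lift : NilSemidirect k l →* H :=
  SemidirectProduct.lift (zpowersPiHom ![z, x, t] h.pairwise_commute) (zpowersHom H y)
    fun g => MonoidHom.ext (h.semiconj_nilAction (toAdd g))

theorem lift_inl_single (i : Fin 3) :
    h.lift (inl (ofAdd (Pi.single i 1))) = ![z, x, t] i := by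
  rw [lift, lift_inl, zpowersPiHom_ofAdd_single, zpow_one]

theorem lift_inr_one : h.lift (inr (ofAdd 1)) = y := by
  rw [lift, lift_inr, zpowersHom_apply, toAdd_ofAdd, zpow_one]

end NilRelations

theorem nilRelations_Γ (k l : ℤ) : NilRelations k l (xΓ k l) (yΓ k l) (zΓ k l) (tΓ k l) := by
  have hmk : FreeGroup.lift ![xΓ k l, yΓ k l, zΓ k l, tΓ k l] = PresentedGroup.mk (nilRels k l) :=
    FreeGroup.ext_hom _ _ fun i => by fin_cases i <;> rfl
  rw [nilRelations_iff, hmk]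
  exact fun _ => PresentedGroup.one_of_mem

section Equiv

variable (k l : ℤ)

def toNilSemidirect : Γ k l →* NilSemidirect k l :=
  PresentedGroup.toGroup (nilRelations_iff.1 (nilRelations_nilSemidirect k l))

theorem toNilSemidirect_of (i : Fin 4) :
    toNilSemidirect k l (PresentedGroup.of i) = ![inl (ofAdd (Pi.single 1 1)), inr (ofAdd 1),
      inl (ofAdd (Pi.single 0 1)), inl (ofAdd (Pi.single 2 1))] i :=
  PresentedGroup.toGroup.of _

theorem lift_comp_toNilSemidirect :
    (nilRelations_Γ k l).lift.comp (toNilSemidirect k l) = MonoidHom.id (Γ k l) :=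
  PresentedGroup.ext fun i => by
    rw [MonoidHom.comp_apply, toNilSemidirect_of, MonoidHom.id_apply]
    fin_cases i
    exacts [NilRelations.lift_inl_single _ 1, NilRelations.lift_inr_one _,
      NilRelations.lift_inl_single _ 0, NilRelations.lift_inl_single _ 2]

theorem toNilSemidirect_comp_lift :
    (toNilSemidirect k l).comp (nilRelations_Γ k l).lift = MonoidHom.id (NilSemidirect k l) := by
  refine SemidirectProduct.hom_ext_ofAdd_single (fun i => ?_) ?_ <;>
    simp only [MonoidHom.comp_apply, NilRelations.lift_inl_single, NilRelations.lift_inr_one,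
      MonoidHom.id_apply]
  · fin_cases i
    exacts [toNilSemidirect_of k l 2, toNilSemidirect_of k l 0, toNilSemidirect_of k l 3]
  · exact toNilSemidirect_of k l 1

def nilEquiv : Γ k l ≃* NilSemidirect k l :=
  MonoidHom.toMulEquiv (toNilSemidirect k l) (nilRelations_Γ k l).lift
    (lift_comp_toNilSemidirect k l) (toNilSemidirect_comp_lift k l)

end Equiv

theorem stmt3 (k l : ℤ) :
    ∃ e : Γ k l ≃* NilSemidirect k l,
      e (zΓ k l) = SemidirectProduct.inl (Multiplicative.ofAdd (Pi.single 0 1)) ∧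
      e (xΓ k l) = SemidirectProduct.inl (Multiplicative.ofAdd (Pi.single 1 1)) ∧
      e (tΓ k l) = SemidirectProduct.inl (Multiplicative.ofAdd (Pi.single 2 1)) ∧
      e (yΓ k l) = SemidirectProduct.inr (Multiplicative.ofAdd (1 : ℤ)) :=
  ⟨nilEquiv k l, toNilSemidirect_of k l 2, toNilSemidirect_of k l 0, toNilSemidirect_of k l 3,
    toNilSemidirect_of k l 1⟩

end Stmt3
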